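/- Equivalence of GLS and whitened ZF estimators: if R_y = V Vᵀ + R_z with R_z positive definite and Vᵀ R_z^{-1} V invertible, then (Vᵀ R_y^{-1} V)^{-1} Vᵀ R_y^{-1} Y = (V̄ᵀ V̄)^{-1} V̄ᵀ Ȳ, where V̄ = R_z^{-1/2} V and Ȳ = R_z^{-1/2} Y. -/

import Mathlib

open Matrix

/-!
Pushing `Vᵀ R_z⁻¹` through `R_y = V Vᵀ + R_z` gives `Vᵀ R_z⁻¹ R_y = (1 + A) Vᵀ` with
`A = Vᵀ R_z⁻¹ V`, so `Vᵀ R_y⁻¹ = (1 + A)⁻¹ Vᵀ R_z⁻¹`. The factor `(1 + A)⁻¹` then cancels between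
`(Vᵀ R_y⁻¹ V)⁻¹ = A⁻¹ (1 + A)` and `Vᵀ R_y⁻¹`, so the GLS estimator weighted by `R_y` is the one
weighted by `R_z`. Whitening by the symmetric square root `S` of `R_z` produces the same
estimator, since `(S⁻¹ V)ᵀ (S⁻¹ W) = Vᵀ R_z⁻¹ W`.
-/

namespace Matrix

variable {m n p R : Type*} [Fintype m] [DecidableEq m] [CommRing R]

theorem transpose_inv_mul_mul_inv_mul (S : Matrix m m R) (V : Matrix m n R) (W : Matrix m p R) :
    (S⁻¹ * V)ᵀ * (S⁻¹ * W) = Vᵀ * (S * Sᵀ)⁻¹ * W := by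
  rw [transpose_mul, transpose_nonsing_inv, mul_inv_rev, Matrix.mul_assoc, Matrix.mul_assoc,
    Matrix.mul_assoc, ← Matrix.mul_assoc Sᵀ⁻¹]

variable [Fintype n] [DecidableEq n]

noncomputable def glsMatrix (V : Matrix m n R) (C : Matrix m m R) : Matrix n m R :=
  (Vᵀ * C⁻¹ * V)⁻¹ * (Vᵀ * C⁻¹)

theorem det_mul_transpose_add (V : Matrix m n R) {Rz : Matrix m m R} (hRz : IsUnit Rz.det) :
    (V * Vᵀ + Rz).det = Rz.det * (1 + Vᵀ * Rz⁻¹ * V).det := by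
  have factor : V * Vᵀ + Rz = Rz * (1 + Rz⁻¹ * V * Vᵀ) := by
    rw [Matrix.mul_add, Matrix.mul_one, ← Matrix.mul_assoc, ← Matrix.mul_assoc,
      mul_nonsing_inv _ hRz, Matrix.one_mul, add_comm]
  rw [factor, det_mul, det_one_add_mul_comm (Rz⁻¹ * V), Matrix.mul_assoc]

variable {V : Matrix m n R} {Rz : Matrix m m R}

theorem isUnit_det_one_add_transpose_mul_inv_mul (hRz : IsUnit Rz.det)
    (hRy : IsUnit (V * Vᵀ + Rz).det) : IsUnit (1 + Vᵀ * Rz⁻¹ * V).det :=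
  isUnit_of_mul_isUnit_right (det_mul_transpose_add V hRz ▸ hRy)

theorem transpose_mul_inv_mul_transpose_add (hRz : IsUnit Rz.det)
    (hRy : IsUnit (V * Vᵀ + Rz).det) :
    Vᵀ * (V * Vᵀ + Rz)⁻¹ = (1 + Vᵀ * Rz⁻¹ * V)⁻¹ * (Vᵀ * Rz⁻¹) := by
  have push : (1 + Vᵀ * Rz⁻¹ * V) * Vᵀ = Vᵀ * Rz⁻¹ * (V * Vᵀ + Rz) := by
    rw [Matrix.mul_add, Matrix.mul_assoc _ Rz⁻¹ Rz, nonsing_inv_mul _ hRz, Matrix.mul_one,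
      Matrix.add_mul, Matrix.one_mul, add_comm]
    simp only [Matrix.mul_assoc]
  calc Vᵀ * (V * Vᵀ + Rz)⁻¹
      = (1 + Vᵀ * Rz⁻¹ * V)⁻¹ * ((1 + Vᵀ * Rz⁻¹ * V) * Vᵀ) * (V * Vᵀ + Rz)⁻¹ := by
        rw [Matrix.nonsing_inv_mul_cancel_left _ _
          (isUnit_det_one_add_transpose_mul_inv_mul hRz hRy)]
    _ = (1 + Vᵀ * Rz⁻¹ * V)⁻¹ * (Vᵀ * Rz⁻¹) := by
        rw [push, ← Matrix.mul_assoc, Matrix.mul_nonsing_inv_cancel_right _ _ hRy]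

theorem glsMatrix_mul_transpose_add (hRz : IsUnit Rz.det) (hRy : IsUnit (V * Vᵀ + Rz).det) :
    glsMatrix V (V * Vᵀ + Rz) = glsMatrix V Rz := by
  have hB := isUnit_det_one_add_transpose_mul_inv_mul hRz hRy
  rw [glsMatrix, glsMatrix, transpose_mul_inv_mul_transpose_add hRz hRy, Matrix.mul_assoc _ _ V,
    mul_inv_rev, nonsing_inv_nonsing_inv _ hB, Matrix.mul_assoc,
    Matrix.mul_nonsing_inv_cancel_left _ _ hB]

end Matrix

theorem gls_eq_whitened_zf_general (L K M : ℕ)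
    (V : Matrix (Fin L) (Fin K) ℝ) (Y : Matrix (Fin L) (Fin M) ℝ)
    (Rz S : Matrix (Fin L) (Fin L) ℝ)
    (hRz : Rz.PosDef) (hS : S.PosDef) (hSS : S * S = Rz) :
    (Vᵀ * (V * Vᵀ + Rz)⁻¹ * V)⁻¹ * Vᵀ * (V * Vᵀ + Rz)⁻¹ * Y =
      ((S⁻¹ * V)ᵀ * (S⁻¹ * V))⁻¹ * (S⁻¹ * V)ᵀ * (S⁻¹ * Y) := by
  have hRy : (V * Vᵀ + Rz).PosDef := by
    refine hRz.posSemidef_add ?_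
    simpa using posSemidef_self_mul_conjTranspose V
  have whiten {p : ℕ} (W : Matrix (Fin L) (Fin p) ℝ) :
      (S⁻¹ * V)ᵀ * (S⁻¹ * W) = Vᵀ * Rz⁻¹ * W := by
    rw [transpose_inv_mul_mul_inv_mul, ← conjTranspose_eq_transpose_of_trivial S, hS.isHermitian.eq, hSS]
  calc (Vᵀ * (V * Vᵀ + Rz)⁻¹ * V)⁻¹ * Vᵀ * (V * Vᵀ + Rz)⁻¹ * Y
      = glsMatrix V (V * Vᵀ + Rz) * Y := by simp only [glsMatrix, Matrix.mul_assoc]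
    _ = glsMatrix V Rz * Y := by
        rw [glsMatrix_mul_transpose_add hRz.det_pos.ne'.isUnit hRy.det_pos.ne'.isUnit]
    _ = ((S⁻¹ * V)ᵀ * (S⁻¹ * V))⁻¹ * (S⁻¹ * V)ᵀ * (S⁻¹ * Y) := by
        rw [Matrix.mul_assoc _ (S⁻¹ * V)ᵀ, whiten, whiten, glsMatrix, Matrix.mul_assoc]

/-- Equivalence of GLS and whitened ZF estimators: if R_y = V Vᵀ + R_z with R_z
positive definite (with positive definite square root S = R_z^{1/2}) and
Vᵀ R_z⁻¹ V invertible, then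
(Vᵀ R_y⁻¹ V)⁻¹ Vᵀ R_y⁻¹ Y = (V̄ᵀ V̄)⁻¹ V̄ᵀ Ȳ with V̄ = R_z^{-1/2} V, Ȳ = R_z^{-1/2} Y. -/
theorem gls_eq_whitened_zf (L K M : ℕ)
    (V : Matrix (Fin L) (Fin K) ℝ) (Y : Matrix (Fin L) (Fin M) ℝ)
    (Rz S : Matrix (Fin L) (Fin L) ℝ)
    (hRz : Rz.PosDef) (hS : S.PosDef) (hSS : S * S = Rz)
    (hinv : IsUnit (Vᵀ * Rz⁻¹ * V).det) :
    (Vᵀ * (V * Vᵀ + Rz)⁻¹ * V)⁻¹ * Vᵀ * (V * Vᵀ + Rz)⁻¹ * Y =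
      ((S⁻¹ * V)ᵀ * (S⁻¹ * V))⁻¹ * (S⁻¹ * V)ᵀ * (S⁻¹ * Y) :=
  gls_eq_whitened_zf_general L K M V Y Rz S hRz hS hSS
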